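/- arXiv:math/0702819 — 2 statements merged into one kernel-verified Lean document; each statement's English description precedes it below -/
import Mathlib

section
/- If c > 0 and δ > 0 are constants such that E[(W_1 − c)^+] ≤ δ, then for every stopping time τ with respect to the filtration (F_n) satisfying E[τ] < ∞, one has E[max(M_τ, c)] ≤ δ·E[τ] + c; in particular E[M_τ] ≤ δ·E[τ] + c. -/
/-!
Pathwise, `max (M n) c ≤ c + ∑_{k<n} (W_{k+1} - c)⁺`. The event `{k < τ}` lies in `ℱ k`, which is
independent of `W_{k+1}`, so integrating in `ℝ≥0∞` (where sum and integral commute freely) gives the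
Wald-type bound `E[∑_{k<τ} (W_{k+1} - c)⁺] = ∑_k P(k < τ) E[(W_1 - c)⁺] ≤ δ E[τ]`.
-/

open MeasureTheory ProbabilityTheory Finset
open scoped ENNReal

lemma max_le_add_sum_max_sub {M a : ℕ → ℝ} {c : ℝ} (h0 : M 0 ≤ c)
    (hM : ∀ n, M (n + 1) = max (M n) (a n)) (n : ℕ) :
    max (M n) c ≤ c + ∑ k ∈ range n, max (a k - c) 0 := by
  induction n with
  | zero => simp [h0]
  | succ n ih =>
    rw [hM n, sum_range_succ]
    have hS : 0 ≤ ∑ k ∈ range n, max (a k - c) 0 := sum_nonneg fun k _ => le_max_right _ _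
    refine max_le (max_le ?_ ?_) ?_ <;>
      linarith [le_max_left (a n - c) 0, le_max_right (a n - c) 0, le_max_left (M n) c]

lemma ofReal_max_le_add_sum_ofReal_max_sub {M a : ℕ → ℝ} {c : ℝ} (hc : 0 ≤ c) (h0 : M 0 ≤ c)
    (hM : ∀ n, M (n + 1) = max (M n) (a n)) (n : ℕ) :
    ENNReal.ofReal (max (M n) c) ≤
      ENNReal.ofReal c + ∑ k ∈ range n, ENNReal.ofReal (max (a k - c) 0) := by
  rw [← ENNReal.ofReal_sum_of_nonneg fun k _ => le_max_right _ _,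
    ← ENNReal.ofReal_add hc (sum_nonneg fun k _ => le_max_right _ _)]
  exact ENNReal.ofReal_le_ofReal (max_le_add_sum_max_sub h0 hM n)

lemma iSup_Icc_one_eq_iSup_Iio_succ {α : Type*} [CompleteLattice α] (f : ℕ → α) (k : ℕ) :
    ⨆ i ∈ Set.Icc 1 k, f i = ⨆ n ∈ Set.Iio k, f (n + 1) := by
  have : Set.Icc 1 k = (· + 1) '' Set.Iio k := by
    ext i
    simp only [Set.mem_Icc, Set.mem_image, Set.mem_Iio]
    exact ⟨fun h => ⟨i - 1, by omega, by omega⟩, by rintro ⟨n, hn, rfl⟩; omega⟩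
  rw [this, iSup_image]

section

variable {Ω : Type*} {m : MeasurableSpace Ω} {P : Measure Ω}

lemma indep_comap_succ_of_eq_iSup_Icc {β : Type*} [MeasurableSpace β] {W : ℕ → Ω → β}
    (hW : ∀ n, Measurable (W n)) (hindep : iIndepFun (fun n => W (n + 1)) P)
    {ℱ : Filtration ℕ m}
    (hℱ : ∀ n, ℱ n = ⨆ i ∈ Set.Icc 1 n, MeasurableSpace.comap (W i) inferInstance) (k : ℕ) :
    Indep (ℱ k) (MeasurableSpace.comap (W (k + 1)) inferInstance) P := by
  have h := indep_iSup_of_disjoint (fun n => (hW (n + 1)).comap_le) hindep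
    (Set.disjoint_singleton_right.2 (Set.self_notMem_Iio (a := k)))
  rwa [_root_.iSup_singleton,
    ← iSup_Icc_one_eq_iSup_Iio_succ (fun i => MeasurableSpace.comap (W i) _), ← hℱ] at h

lemma setLIntegral_eq_measure_mul_lintegral_of_indep {mA : MeasurableSpace Ω} (hmA : mA ≤ m)
    {A : Set Ω} (hA : MeasurableSet[mA] A) {X : Ω → ℝ≥0∞} (hX : Measurable[m] X)
    (hindep : Indep mA (MeasurableSpace.comap X inferInstance) P) :
    ∫⁻ ω in A, X ω ∂P = P A * ∫⁻ ω, X ω ∂P := by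
  have hprod : A.indicator X = fun ω => A.indicator 1 ω * X ω := by
    ext ω; by_cases hω : ω ∈ A <;> simp [hω]
  rw [← lintegral_indicator (hmA _ hA), ← lintegral_indicator_one (hmA _ hA), hprod]
  exact lintegral_mul_eq_lintegral_mul_lintegral_of_independent_measurableSpace hmA hX.comap_le
    hindep (measurable_one.indicator hA) (comap_measurable X)

lemma lintegral_sum_range_eq_tsum_setLIntegral {τ : Ω → ℕ} (hτ : Measurable τ)
    {X : ℕ → Ω → ℝ≥0∞} (hX : ∀ k, Measurable (X k)) :
    ∫⁻ ω, ∑ k ∈ range (τ ω), X k ω ∂P = ∑' k, ∫⁻ ω in {ω | k < τ ω}, X k ω ∂P := by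
  have hA : ∀ k, MeasurableSet {ω | k < τ ω} := fun k => measurableSet_lt measurable_const hτ
  have hsum : ∀ ω, ∑ k ∈ range (τ ω), X k ω = ∑' k, {ω | k < τ ω}.indicator (X k) ω := by
    intro ω
    rw [tsum_eq_sum (s := range (τ ω)) fun k hk =>
      Set.indicator_of_notMem (by simpa using hk) _]
    exact sum_congr rfl fun k hk =>
      (Set.indicator_of_mem (show ω ∈ {ω | k < τ ω} from mem_range.1 hk) _).symm
  simp_rw [hsum]
  rw [lintegral_tsum fun k => ((hX k).indicator (hA k)).aemeasurable]
  exact tsum_congr fun k => lintegral_indicator (hA k) _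

lemma lintegral_natCast_eq_tsum_measure_lt {τ : Ω → ℕ} (hτ : Measurable τ) :
    ∫⁻ ω, (τ ω : ℝ≥0∞) ∂P = ∑' k, P {ω | k < τ ω} := by
  simpa using lintegral_sum_range_eq_tsum_setLIntegral (P := P) hτ (fun _ => measurable_one)

lemma measurable_apply_of_measurable_index {β : Type*} [MeasurableSpace β] {X : ℕ → Ω → β}
    (hX : ∀ n, Measurable (X n)) {τ : Ω → ℕ} (hτ : Measurable τ) :
    Measurable fun ω => X (τ ω) ω :=
  (measurable_from_prod_countable_left (f := fun p : Ω × ℕ => X p.2 p.1) hX).comp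
    (measurable_id.prodMk hτ)

lemma measurable_of_isStoppingTime {ℱ : Filtration ℕ m} {τ : Ω → ℕ}
    (hτ : IsStoppingTime ℱ (fun ω => (τ ω : WithTop ℕ))) : Measurable τ :=
  measurable_to_countable' fun n =>
    ℱ.le n _ (by simpa [Set.preimage, WithTop.coe_inj] using hτ.measurableSet_eq n)

theorem lintegral_sum_range_le_mul_lintegral_of_isStoppingTime {ℱ : Filtration ℕ m}
    {τ : Ω → ℕ} (hτ : IsStoppingTime ℱ (fun ω => (τ ω : WithTop ℕ)))
    {X : ℕ → Ω → ℝ≥0∞} (hX : ∀ k, Measurable (X k))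
    (hindep : ∀ k, Indep (ℱ k) (MeasurableSpace.comap (X k) inferInstance) P)
    {C : ℝ≥0∞} (hC : ∀ k, ∫⁻ ω, X k ω ∂P ≤ C) :
    ∫⁻ ω, ∑ k ∈ range (τ ω), X k ω ∂P ≤ C * ∫⁻ ω, (τ ω : ℝ≥0∞) ∂P := by
  have hτm := measurable_of_isStoppingTime hτ
  have hA : ∀ k, MeasurableSet[ℱ k] {ω | k < τ ω} := fun k => by
    simpa using hτ.measurableSet_gt k
  calc ∫⁻ ω, ∑ k ∈ range (τ ω), X k ω ∂P
      = ∑' k, P {ω | k < τ ω} * ∫⁻ ω, X k ω ∂P := by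
        rw [lintegral_sum_range_eq_tsum_setLIntegral hτm hX]
        exact tsum_congr fun k =>
          setLIntegral_eq_measure_mul_lintegral_of_indep (ℱ.le k) (hA k) (hX k) (hindep k)
    _ ≤ ∑' k, P {ω | k < τ ω} * C := by gcongr with k; exact hC k
    _ = C * ∫⁻ ω, (τ ω : ℝ≥0∞) ∂P := by
        rw [ENNReal.tsum_mul_right, mul_comm, lintegral_natCast_eq_tsum_measure_lt hτm]

lemma integrable_and_integral_le_of_lintegral_ofReal_le {f : Ω → ℝ}
    (hf : AEStronglyMeasurable f P) (hf0 : 0 ≤ᵐ[P] f) {r : ℝ} (hr : 0 ≤ r)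
    (h : ∫⁻ ω, ENNReal.ofReal (f ω) ∂P ≤ ENNReal.ofReal r) :
    Integrable f P ∧ ∫ ω, f ω ∂P ≤ r := by
  refine ⟨⟨hf, ?_⟩, ?_⟩
  · rw [hasFiniteIntegral_iff_ofReal hf0]
    exact h.trans_lt ENNReal.ofReal_lt_top
  · rw [integral_eq_lintegral_of_nonneg_ae hf0 hf]
    exact ENNReal.toReal_le_of_le_ofReal hr h

theorem lintegral_sum_range_ofReal_max_sub_le [IsFiniteMeasure P] {W : ℕ → Ω → ℝ}
    (hW_meas : ∀ n, Measurable (W n))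
    (hW_indep : iIndepFun (fun n => W (n + 1)) P)
    (hW_ident : ∀ n, 1 ≤ n → IdentDistrib (W n) (W 1) P P) (hW1 : Integrable (W 1) P)
    {ℱ : Filtration ℕ m}
    (hℱ : ∀ n, ℱ n = ⨆ i ∈ Set.Icc 1 n, MeasurableSpace.comap (W i) inferInstance)
    {τ : Ω → ℕ} (hτ : IsStoppingTime ℱ (fun ω => (τ ω : WithTop ℕ))) (c : ℝ) :
    ∫⁻ ω, ∑ k ∈ range (τ ω), ENNReal.ofReal (max (W (k + 1) ω - c) 0) ∂P ≤
      ENNReal.ofReal (∫ ω, max (W 1 ω - c) 0 ∂P) * ∫⁻ ω, (τ ω : ℝ≥0∞) ∂P := by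
  have hφ : Measurable fun x : ℝ => ENNReal.ofReal (max (x - c) 0) := by fun_prop
  refine lintegral_sum_range_le_mul_lintegral_of_isStoppingTime hτ
    (X := fun k => (fun x => ENNReal.ofReal (max (x - c) 0)) ∘ W (k + 1))
    (fun k => hφ.comp (hW_meas _)) (fun k => ?_) (fun k => ?_)
  · exact indep_of_indep_of_le_right (indep_comap_succ_of_eq_iSup_Icc hW_meas hW_indep hℱ k)
      (hφ.comp (comap_measurable (W (k + 1)))).comap_le
  · rw [((hW_ident (k + 1) (by omega)).comp hφ).lintegral_eq]
    exact (ofReal_integral_eq_lintegral_ofReal (hW1.sub (integrable_const c)).pos_part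
      (.of_forall fun ω => le_max_right _ _)).symm.le

lemma measurable_of_max_recursion {M W : ℕ → Ω → ℝ} (hM0 : Measurable (M 0))
    (hM : ∀ n, M (n + 1) = fun ω => max (M n ω) (W (n + 1) ω))
    (hW : ∀ n, Measurable (W n)) (n : ℕ) : Measurable (M n) := by
  induction n with
  | zero => exact hM0
  | succ n ih => rw [hM n]; exact ih.max (hW (n + 1))

lemma nonneg_of_max_recursion {M W : ℕ → Ω → ℝ} (hM0 : ∀ ω, 0 ≤ M 0 ω)
    (hM : ∀ n, M (n + 1) = fun ω => max (M n ω) (W (n + 1) ω)) (n : ℕ) (ω : Ω) :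
    0 ≤ M n ω := by
  induction n with
  | zero => exact hM0 ω
  | succ n ih => rw [hM n]; exact le_max_of_le_left ih

end

theorem maxIID_stoppedValue_le_general
    {Ω : Type*} {m : MeasurableSpace Ω} {P : Measure Ω} [IsProbabilityMeasure P]
    (W : ℕ → Ω → ℝ)
    (hW_meas : ∀ n, Measurable (W n))
    (hW_indep : iIndepFun (fun n : ℕ => W (n + 1)) P)
    (hW_ident : ∀ n, 1 ≤ n → IdentDistrib (W n) (W 1) P P)
    (hW_int : ∀ n, 1 ≤ n → Integrable (W n) P)
    (ℱ : Filtration ℕ m)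
    (hℱ : ∀ n, ℱ n = ⨆ i ∈ Set.Icc 1 n, MeasurableSpace.comap (W i) inferInstance)
    (M : ℕ → Ω → ℝ)
    (hM0 : M 0 = fun _ => 0)
    (hM : ∀ n, M (n + 1) = fun ω => max (M n ω) (W (n + 1) ω))
    (c δ : ℝ) (hc : 0 < c)
    (hWc : ∫ ω, max (W 1 ω - c) 0 ∂P ≤ δ) :
    ∀ τ : Ω → ℕ, IsStoppingTime ℱ (fun ω => (τ ω : WithTop ℕ)) → Integrable (fun ω => (τ ω : ℝ)) P →
      (∫ ω, max (M (τ ω) ω) c ∂P ≤ δ * ∫ ω, (τ ω : ℝ) ∂P + c) ∧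
      (∫ ω, M (τ ω) ω ∂P ≤ δ * ∫ ω, (τ ω : ℝ) ∂P + c) := by
  intro τ hτ hτ_int
  have hδ : 0 ≤ δ := (integral_nonneg fun ω => le_max_right _ _).trans hWc
  have hlint : ∫⁻ ω, ENNReal.ofReal (max (M (τ ω) ω) c) ∂P ≤
      ENNReal.ofReal (δ * ∫ ω, (τ ω : ℝ) ∂P + c) := calc
    _ ≤ ∫⁻ ω, ENNReal.ofReal c +
          ∑ k ∈ range (τ ω), ENNReal.ofReal (max (W (k + 1) ω - c) 0) ∂P :=
      lintegral_mono fun ω => ofReal_max_le_add_sum_ofReal_max_sub (M := fun n => M n ω) hc.le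
        (by simp [hM0, hc.le]) (fun n => by simp [hM n]) (τ ω)
    _ = ENNReal.ofReal c +
          ∫⁻ ω, ∑ k ∈ range (τ ω), ENNReal.ofReal (max (W (k + 1) ω - c) 0) ∂P := by
      rw [lintegral_add_left measurable_const, lintegral_const, measure_univ, mul_one]
    _ ≤ ENNReal.ofReal c + ENNReal.ofReal δ * ∫⁻ ω, (τ ω : ℝ≥0∞) ∂P := by
      grw [lintegral_sum_range_ofReal_max_sub_le hW_meas hW_indep hW_ident (hW_int 1 le_rfl) hℱ hτ,
        ENNReal.ofReal_le_ofReal hWc]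
    _ = ENNReal.ofReal (δ * ∫ ω, (τ ω : ℝ) ∂P + c) := by
      rw [add_comm, ENNReal.ofReal_add (by positivity) hc.le, ENNReal.ofReal_mul hδ,
        ofReal_integral_eq_lintegral_ofReal hτ_int (.of_forall fun ω => Nat.cast_nonneg _)]
      simp
  have hMτ_meas : Measurable fun ω => M (τ ω) ω := measurable_apply_of_measurable_index
    (measurable_of_max_recursion (by simp [hM0]) hM hW_meas) (measurable_of_isStoppingTime hτ)
  obtain ⟨hF_int, hF_le⟩ := integrable_and_integral_le_of_lintegral_ofReal_le
    (hMτ_meas.max measurable_const).aestronglyMeasurable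
    (.of_forall fun ω => hc.le.trans (le_max_right _ _)) (by positivity) hlint
  refine ⟨hF_le, le_trans ?_ hF_le⟩
  exact integral_mono_of_nonneg
    (.of_forall fun ω => nonneg_of_max_recursion (by simp [hM0]) hM (τ ω) ω) hF_int
    (.of_forall fun ω => le_max_left _ _)

/-- With `(W_n)_{n ≥ 1}` i.i.d. nonnegative integrable, `ℱ n = σ(W_1, …, W_n)`,
`M 0 = 0`, `M n = max_{1 ≤ k ≤ n} W k`: if `c > 0`, `δ > 0` and `E[(W_1 − c)⁺] ≤ δ`, then for
every stopping time `τ` with `E[τ] < ∞` one has `E[max(M_τ, c)] ≤ δ·E[τ] + c`; in particular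
`E[M_τ] ≤ δ·E[τ] + c`. -/
theorem maxIID_stoppedValue_le
    {Ω : Type*} {m : MeasurableSpace Ω} {P : Measure Ω} [IsProbabilityMeasure P]
    (W : ℕ → Ω → ℝ)
    (hW_meas : ∀ n, Measurable (W n))
    (hW_indep : iIndepFun (fun n : ℕ => W (n + 1)) P)
    (hW_ident : ∀ n, 1 ≤ n → IdentDistrib (W n) (W 1) P P)
    (hW_nonneg : ∀ n ω, 1 ≤ n → 0 ≤ W n ω)
    (hW_int : ∀ n, 1 ≤ n → Integrable (W n) P)
    (ℱ : Filtration ℕ m)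
    (hℱ : ∀ n, ℱ n = ⨆ i ∈ Set.Icc 1 n, MeasurableSpace.comap (W i) inferInstance)
    (M : ℕ → Ω → ℝ)
    (hM0 : M 0 = fun _ => 0)
    (hM : ∀ n, M (n + 1) = fun ω => max (M n ω) (W (n + 1) ω))
    (c δ : ℝ) (hc : 0 < c) (hδ : 0 < δ)
    (hWc : ∫ ω, max (W 1 ω - c) 0 ∂P ≤ δ) :
    ∀ τ : Ω → ℕ, IsStoppingTime ℱ (fun ω => (τ ω : WithTop ℕ)) → Integrable (fun ω => (τ ω : ℝ)) P →
      (∫ ω, max (M (τ ω) ω) c ∂P ≤ δ * ∫ ω, (τ ω : ℝ) ∂P + c) ∧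
      (∫ ω, M (τ ω) ω ∂P ≤ δ * ∫ ω, (τ ω : ℝ) ∂P + c) :=
  maxIID_stoppedValue_le_general W hW_meas hW_indep hW_ident hW_int ℱ hℱ M hM0 hM c δ hc hWc
end

section
/- For every x ∈ D, the return time σ to the set G is almost surely finite under P_x, and moreover E_x[σ] ≤ (V(x) + b)/β. -/
/-!
Let `A n` be the event that the chain avoids `G` at times `1, …, n`, so that `{n < σ} = A n`
and `E_x[σ] = ∑ₙ P_x(A n)`. Before the chain hits `G` the drift condition reads `PV ≤ (1 - β) V`,
so by the Markov property `M n = E_x[V(X n); A n]` decays geometrically from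
`M 1 ≤ PV(x) ≤ (1 - β) V(x) + b`. As `V ≥ 1`, `P_x(A n) ≤ M n`, and summing the geometric series
gives `E_x[σ] ≤ 1 + ((1 - β) V(x) + b) / β ≤ (V(x) + b) / β`. A random time with finite
expectation is almost surely finite.
-/

open MeasureTheory ProbabilityTheory ENNReal

/-- The first hitting time `σ = inf {n ≥ 1 : ω n ∈ G}` of a set `G`, with value `⊤ = ∞`
if the trajectory never enters `G` at a positive time. -/
noncomputable def hittingTimeGe1 {D : Type*} (G : Set D) (ω : ℕ → D) : ℕ∞ :=
  ⨅ n ∈ {n : ℕ | 1 ≤ n ∧ ω n ∈ G}, (n : ℕ∞)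

section TailSum

variable {Ω : Type*} {τ : Ω → ℕ∞}

lemma ENat.toENNReal_eq_tsum_ite_lt (m : ℕ∞) :
    (m : ℝ≥0∞) = ∑' n : ℕ, if (n : ℕ∞) < m then 1 else 0 := by
  induction m using ENat.recTopCoe with
  | top => simp
  | coe k =>
    rw [tsum_eq_sum (s := Finset.range k) (fun n hn => by simpa using hn)]
    simp [Finset.filter_true_of_mem fun n hn => Finset.mem_range.mp hn]

lemma toENNReal_eq_tsum_indicator_lt (ω : Ω) :
    (τ ω : ℝ≥0∞) = ∑' n : ℕ, {ω | (n : ℕ∞) < τ ω}.indicator 1 ω := by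
  simp [ENat.toENNReal_eq_tsum_ite_lt (τ ω), Set.indicator_apply]

variable [MeasurableSpace Ω] {μ : Measure Ω}

lemma measurable_toENNReal_of_measurableSet_lt (hτ : ∀ n : ℕ, MeasurableSet {ω | (n : ℕ∞) < τ ω}) :
    Measurable fun ω => (τ ω : ℝ≥0∞) := by
  simp_rw [toENNReal_eq_tsum_indicator_lt]
  exact .tsum fun n => measurable_one.indicator (hτ n)

lemma lintegral_toENNReal_eq_tsum_measure_lt
    (hτ : ∀ n : ℕ, MeasurableSet {ω | (n : ℕ∞) < τ ω}) :
    ∫⁻ ω, (τ ω : ℝ≥0∞) ∂μ = ∑' n : ℕ, μ {ω | (n : ℕ∞) < τ ω} := by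
  simp_rw [toENNReal_eq_tsum_indicator_lt]
  rw [lintegral_tsum fun n => (measurable_one.indicator (hτ n)).aemeasurable]
  exact tsum_congr fun n => lintegral_indicator_one (hτ n)

lemma measure_lt_top_eq_one_of_lintegral_ne_top [IsProbabilityMeasure μ]
    (hτ : ∀ n : ℕ, MeasurableSet {ω | (n : ℕ∞) < τ ω})
    (hint : ∫⁻ ω, (τ ω : ℝ≥0∞) ∂μ ≠ ⊤) : μ {ω | τ ω < ⊤} = 1 := by
  have hmeas := measurable_toENNReal_of_measurableSet_lt hτ
  simp_rw [← ENat.toENNReal_lt_top]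
  exact ((ae_iff_measure_eq (measurableSet_lt hmeas measurable_const).nullMeasurableSet).mp
    (ae_lt_top hmeas hint)).trans measure_univ

end TailSum

lemma lintegral_comp_eq_of_measure_eq_one {Ω D : Type*} [MeasurableSpace Ω] [MeasurableSpace D]
    {μ : Measure Ω} [IsProbabilityMeasure μ] {X : Ω → D} (hX : Measurable X)
    {f : D → ℝ≥0∞} (hf : Measurable f) {x : D} (hx : μ {ω | X ω = x} = 1) :
    ∫⁻ ω, f (X ω) ∂μ = f x := by
  -- `{X = x}` need not be measurable, but the larger event `{f ∘ X = f x}` is.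
  have hmeas : MeasurableSet {ω | f (X ω) = f x} :=
    measurableSet_eq_fun (hf.comp hX) measurable_const
  have hae : ∀ᵐ ω ∂μ, f (X ω) = f x := by
    rw [ae_iff_measure_eq hmeas.nullMeasurableSet, measure_univ]
    exact le_antisymm prob_le_one (hx ▸ measure_mono fun ω (hω : X ω = x) => by simp [hω])
  rw [lintegral_congr_ae hae, lintegral_const, measure_univ, mul_one]

section MarkovChain

variable {D : Type*}

def avoidUpTo (G : Set D) (n : ℕ) : Set (ℕ → D) := {ω | ∀ k, 1 ≤ k → k ≤ n → ω k ∉ G}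

variable {G : Set D}

lemma avoidUpTo_zero : avoidUpTo G 0 = Set.univ :=
  Set.eq_univ_of_forall fun _ k hk1 hk0 => absurd (hk1.trans hk0) (by omega)

lemma avoidUpTo_succ_subset (n : ℕ) : avoidUpTo G (n + 1) ⊆ avoidUpTo G n :=
  fun _ hω k hk1 hkn => hω k hk1 (hkn.trans n.le_succ)

lemma setOf_lt_hittingTimeGe1 (n : ℕ) :
    {ω | (n : ℕ∞) < hittingTimeGe1 G ω} = avoidUpTo G n := by
  ext ω
  rw [Set.mem_ofPred_eq, ← ENat.add_one_le_iff (ENat.natCast_ne_top n), hittingTimeGe1,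
    le_iInf₂_iff]
  refine forall_congr' fun k => ?_
  norm_cast
  grind

variable [MeasurableSpace D]

lemma measurableSet_comap_avoidUpTo (hG : MeasurableSet G) (n : ℕ) :
    MeasurableSet[MeasurableSpace.comap (fun (ω : ℕ → D) (i : Fin (n + 1)) => ω i)
      inferInstance] (avoidUpTo G n) := by
  have hcoord : ∀ k (hk : k < n + 1), Measurable[MeasurableSpace.comap
      (fun (ω : ℕ → D) (i : Fin (n + 1)) => ω i) inferInstance] fun ω : ℕ → D => ω k :=
    fun k hk => (measurable_pi_apply (⟨k, hk⟩ : Fin (n + 1))).comp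
      (comap_measurable (fun (ω : ℕ → D) (i : Fin (n + 1)) => ω i))
  simp only [avoidUpTo, Set.ofPred_forall]
  exact .iInter fun k => .iInter fun _ => .iInter fun hkn => hcoord k (by omega) hG.compl

lemma measurableSet_avoidUpTo (hG : MeasurableSet G) (n : ℕ) : MeasurableSet (avoidUpTo G n) :=
  (measurable_pi_lambda _ fun _ => measurable_pi_apply _).comap_le _
    (measurableSet_comap_avoidUpTo hG n)

lemma measurableSet_setOf_lt_hittingTimeGe1 (hG : MeasurableSet G) (n : ℕ) :
    MeasurableSet {ω | (n : ℕ∞) < hittingTimeGe1 G ω} :=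
  setOf_lt_hittingTimeGe1 n ▸ measurableSet_avoidUpTo hG n

def IsMarkovChainLaw (κ : Kernel D D) (μ : Measure (ℕ → D)) : Prop :=
  ∀ (n : ℕ) (B : Set (ℕ → D)),
    MeasurableSet[MeasurableSpace.comap (fun (ω : ℕ → D) (i : Fin (n + 1)) => ω i)
      inferInstance] B →
    ∀ A : Set D, MeasurableSet A → μ (B ∩ {ω | ω (n + 1) ∈ A}) = ∫⁻ ω in B, κ (ω n) A ∂μ

namespace IsMarkovChainLaw

variable {κ : Kernel D D} {μ : Measure (ℕ → D)}

lemma setLIntegral_eval_succ (hμ : IsMarkovChainLaw κ μ) {n : ℕ} {B : Set (ℕ → D)}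
    (hB : MeasurableSet[MeasurableSpace.comap (fun (ω : ℕ → D) (i : Fin (n + 1)) => ω i)
      inferInstance] B)
    {g : D → ℝ≥0∞} (hg : Measurable g) :
    ∫⁻ ω in B, g (ω (n + 1)) ∂μ = ∫⁻ ω in B, ∫⁻ y, g y ∂κ (ω n) ∂μ := by
  have hκ : Measurable fun ω : ℕ → D => κ (ω n) := κ.measurable.comp (measurable_pi_apply n)
  have hlaw : (μ.restrict B).map (fun ω => ω (n + 1)) = (μ.restrict B).bind fun ω => κ (ω n) := by
    ext A hA
    rw [Measure.map_apply (measurable_pi_apply _) hA,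
      Measure.restrict_apply (measurable_pi_apply _ hA), Set.inter_comm,
      Measure.bind_apply hA hκ.aemeasurable]
    exact hμ n B hB A hA
  rw [← lintegral_map hg (measurable_pi_apply _), hlaw,
    Measure.lintegral_bind hκ.aemeasurable hg.aemeasurable]

variable {v : D → ℝ≥0∞} {r : ℝ≥0∞}

lemma setLIntegral_avoidUpTo_succ_le (hμ : IsMarkovChainLaw κ μ) (hG : MeasurableSet G)
    (hv : Measurable v) (hdrift : ∀ y ∉ G, ∫⁻ z, v z ∂κ y ≤ r * v y) {n : ℕ} (hn : 1 ≤ n) :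
    ∫⁻ ω in avoidUpTo G (n + 1), v (ω (n + 1)) ∂μ ≤ r * ∫⁻ ω in avoidUpTo G n, v (ω n) ∂μ :=
  calc ∫⁻ ω in avoidUpTo G (n + 1), v (ω (n + 1)) ∂μ
      ≤ ∫⁻ ω in avoidUpTo G n, v (ω (n + 1)) ∂μ := lintegral_mono_set (avoidUpTo_succ_subset n)
    _ = ∫⁻ ω in avoidUpTo G n, ∫⁻ z, v z ∂κ (ω n) ∂μ :=
      hμ.setLIntegral_eval_succ (measurableSet_comap_avoidUpTo hG n) hv
    _ ≤ ∫⁻ ω in avoidUpTo G n, r * v (ω n) ∂μ :=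
      setLIntegral_mono (measurable_const.mul (hv.comp (measurable_pi_apply n)))
        fun _ hω => hdrift _ (hω n hn le_rfl)
    _ = r * ∫⁻ ω in avoidUpTo G n, v (ω n) ∂μ :=
      lintegral_const_mul r (hv.comp (measurable_pi_apply n))

lemma setLIntegral_avoidUpTo_le_pow (hμ : IsMarkovChainLaw κ μ) [IsProbabilityMeasure μ]
    {x : D} (hx : μ {ω | ω 0 = x} = 1) (hG : MeasurableSet G) (hv : Measurable v)
    (hdrift : ∀ y ∉ G, ∫⁻ z, v z ∂κ y ≤ r * v y) (n : ℕ) :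
    ∫⁻ ω in avoidUpTo G (n + 1), v (ω (n + 1)) ∂μ ≤ r ^ n * ∫⁻ y, v y ∂κ x := by
  induction n with
  | zero =>
    calc ∫⁻ ω in avoidUpTo G 1, v (ω 1) ∂μ ≤ ∫⁻ ω, v (ω 1) ∂μ := setLIntegral_le_lintegral _ _
      _ = ∫⁻ ω, ∫⁻ y, v y ∂κ (ω 0) ∂μ := by
        simpa [avoidUpTo_zero] using
          hμ.setLIntegral_eval_succ (measurableSet_comap_avoidUpTo hG 0) hv
      _ = r ^ 0 * ∫⁻ y, v y ∂κ x := by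
        rw [pow_zero, one_mul,
          lintegral_comp_eq_of_measure_eq_one (measurable_pi_apply 0) hv.lintegral_kernel hx]
  | succ n ih =>
    calc _ ≤ r * ∫⁻ ω in avoidUpTo G (n + 1), v (ω (n + 1)) ∂μ :=
          hμ.setLIntegral_avoidUpTo_succ_le hG hv hdrift (Nat.le_add_left 1 n)
      _ ≤ r * (r ^ n * ∫⁻ y, v y ∂κ x) := by gcongr
      _ = r ^ (n + 1) * ∫⁻ y, v y ∂κ x := by ring

theorem lintegral_hittingTimeGe1_le (hμ : IsMarkovChainLaw κ μ) [IsProbabilityMeasure μ]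
    {x : D} (hx : μ {ω | ω 0 = x} = 1) (hG : MeasurableSet G) (hv : Measurable v)
    (hv_one : ∀ y, 1 ≤ v y) (hdrift : ∀ y ∉ G, ∫⁻ z, v z ∂κ y ≤ r * v y) :
    ∫⁻ ω, (hittingTimeGe1 G ω : ℝ≥0∞) ∂μ ≤ 1 + (1 - r)⁻¹ * ∫⁻ y, v y ∂κ x := by
  have hmeasure (n : ℕ) : μ (avoidUpTo G (n + 1)) ≤ r ^ n * ∫⁻ y, v y ∂κ x :=
    calc μ (avoidUpTo G (n + 1)) = ∫⁻ _ in avoidUpTo G (n + 1), 1 ∂μ := (setLIntegral_one _).symm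
      _ ≤ ∫⁻ ω in avoidUpTo G (n + 1), v (ω (n + 1)) ∂μ := lintegral_mono fun ω => hv_one _
      _ ≤ r ^ n * ∫⁻ y, v y ∂κ x := hμ.setLIntegral_avoidUpTo_le_pow hx hG hv hdrift n
  rw [lintegral_toENNReal_eq_tsum_measure_lt (measurableSet_setOf_lt_hittingTimeGe1 hG),
    tsum_eq_zero_add' ENNReal.summable, ← ENNReal.tsum_geometric, ← ENNReal.tsum_mul_right]
  simp only [setOf_lt_hittingTimeGe1]
  exact add_le_add prob_le_one (ENNReal.tsum_le_tsum hmeasure)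

end IsMarkovChainLaw

end MarkovChain

lemma one_add_inv_one_sub_ofReal_mul_le {β b V : ℝ} (hβ : 0 < β) (hβ1 : β < 1) (hb : 0 ≤ b)
    (hV : 1 ≤ V) :
    1 + (1 - ENNReal.ofReal (1 - β))⁻¹ * ENNReal.ofReal ((1 - β) * V + b)
      ≤ ENNReal.ofReal ((V + b) / β) := by
  have hc : 0 ≤ (1 - β) * V + b :=
    add_nonneg (mul_nonneg (sub_nonneg.mpr hβ1.le) (zero_le_one.trans hV)) hb
  rw [← ENNReal.ofReal_one, ← ENNReal.ofReal_sub _ (sub_nonneg.mpr hβ1.le),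
    _root_.sub_sub_cancel, ← ENNReal.div_eq_inv_mul, ← ENNReal.ofReal_div_of_pos hβ,
    ← ENNReal.ofReal_add zero_le_one (div_nonneg hc hβ.le)]
  refine ENNReal.ofReal_le_ofReal ?_
  have : (V + b) / β - (1 + ((1 - β) * V + b) / β) = V - 1 := by
    field_simp
    ring
  linarith

theorem drift_return_time_finite_general
    {D : Type*} [MeasurableSpace D]
    (κ : ProbabilityTheory.Kernel D D)
    (Px : D → Measure (ℕ → D))
    (hprob : ∀ x, IsProbabilityMeasure (Px x))
    (hstart : ∀ x, Px x {ω | ω 0 = x} = 1)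
    (hMarkov : ∀ (x : D) (n : ℕ) (B : Set (ℕ → D)),
      MeasurableSet[MeasurableSpace.comap (fun (ω : ℕ → D) (i : Fin (n + 1)) => ω i)
        inferInstance] B →
      ∀ A : Set D, MeasurableSet A →
        Px x (B ∩ {ω | ω (n + 1) ∈ A}) = ∫⁻ ω in B, κ (ω n) A ∂(Px x))
    (V : D → ℝ) (hV_meas : Measurable V) (hV_one : ∀ x, 1 ≤ V x)
    (G : Set D) (hG : MeasurableSet G)
    (β b : ℝ) (hβ : 0 < β) (hβ1 : β < 1) (hb : 0 ≤ b)
    (hdrift : ∀ x, ∫⁻ y, ENNReal.ofReal (V y) ∂(κ x)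
      ≤ ENNReal.ofReal ((1 - β) * V x + b * G.indicator 1 x)) :
    ∀ x : D,
      Px x {ω | hittingTimeGe1 G ω < ⊤} = 1 ∧
      ∫⁻ ω, (hittingTimeGe1 G ω : ℝ≥0∞) ∂(Px x) ≤ ENNReal.ofReal ((V x + b) / β) := by
  intro x
  have := hprob x
  have hμ : IsMarkovChainLaw κ (Px x) := hMarkov x
  have hdrift_off : ∀ y ∉ G, ∫⁻ z, ENNReal.ofReal (V z) ∂κ y
      ≤ ENNReal.ofReal (1 - β) * ENNReal.ofReal (V y) := fun y hy => by
    simpa [Set.indicator_of_notMem hy, ENNReal.ofReal_mul (sub_nonneg.mpr hβ1.le)] using hdrift y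
  have hσ : ∫⁻ ω, (hittingTimeGe1 G ω : ℝ≥0∞) ∂(Px x) ≤ ENNReal.ofReal ((V x + b) / β) :=
    calc ∫⁻ ω, (hittingTimeGe1 G ω : ℝ≥0∞) ∂(Px x)
        ≤ 1 + (1 - ENNReal.ofReal (1 - β))⁻¹ * ∫⁻ z, ENNReal.ofReal (V z) ∂κ x :=
          hμ.lintegral_hittingTimeGe1_le (hstart x) hG hV_meas.ennreal_ofReal
            (fun y => ENNReal.one_le_ofReal.mpr (hV_one y)) hdrift_off
      _ ≤ 1 + (1 - ENNReal.ofReal (1 - β))⁻¹ * ENNReal.ofReal ((1 - β) * V x + b) := by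
          gcongr
          refine (hdrift x).trans (ENNReal.ofReal_le_ofReal ?_)
          gcongr
          exact mul_le_of_le_one_right hb (Set.indicator_le_self' (fun _ _ => zero_le_one) x)
      _ ≤ ENNReal.ofReal ((V x + b) / β) :=
          one_add_inv_one_sub_ofReal_mul_le hβ hβ1 hb (hV_one x)
  exact ⟨measure_lt_top_eq_one_of_lintegral_ne_top (measurableSet_setOf_lt_hittingTimeGe1 hG)
    (hσ.trans_lt ENNReal.ofReal_lt_top).ne, hσ⟩

/-- For the Markov chain with kernel `κ` started at `x` (law `Px x` on path
space), under the drift condition `∫ V(y) κ(x, dy) ≤ (1 − β)·V(x) + b·1_G(x)`, the return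
time `σ` to `G` is `Px x`-a.s. finite and `E_x[σ] ≤ (V(x) + b)/β`. -/
theorem drift_return_time_finite
    {D : Type*} [MeasurableSpace D]
    (κ : ProbabilityTheory.Kernel D D) [ProbabilityTheory.IsMarkovKernel κ]
    (Px : D → Measure (ℕ → D))
    (hprob : ∀ x, IsProbabilityMeasure (Px x))
    (hstart : ∀ x, Px x {ω | ω 0 = x} = 1)
    (hMarkov : ∀ (x : D) (n : ℕ) (B : Set (ℕ → D)),
      MeasurableSet[MeasurableSpace.comap (fun (ω : ℕ → D) (i : Fin (n + 1)) => ω i)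
        inferInstance] B →
      ∀ A : Set D, MeasurableSet A →
        Px x (B ∩ {ω | ω (n + 1) ∈ A}) = ∫⁻ ω in B, κ (ω n) A ∂(Px x))
    (V : D → ℝ) (hV_meas : Measurable V) (hV_one : ∀ x, 1 ≤ V x)
    (G : Set D) (hG : MeasurableSet G)
    (β b : ℝ) (hβ : 0 < β) (hβ1 : β < 1) (hb : 0 ≤ b)
    (hdrift : ∀ x, ∫⁻ y, ENNReal.ofReal (V y) ∂(κ x)
      ≤ ENNReal.ofReal ((1 - β) * V x + b * G.indicator 1 x)) :
    ∀ x : D,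
      Px x {ω | hittingTimeGe1 G ω < ⊤} = 1 ∧
      ∫⁻ ω, (hittingTimeGe1 G ω : ℝ≥0∞) ∂(Px x) ≤ ENNReal.ofReal ((V x + b) / β) :=
  drift_return_time_finite_general κ Px hprob hstart hMarkov V hV_meas hV_one G hG β b hβ hβ1 hb
    hdrift
end
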